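/- Let x be a substring of w with two occurrences starting at positions a < b that both cross position k, consecutive among crossing occurrences of x, and let d = b - a. Then d < |x|, the factor w[a..b+|x|-1] has period d, and the maximal extension of this factor with period d yields a run of w whose smallest period is exactly d. -/

import Mathlib

open scoped Classical

/-- `p` is a period of `w[i..j]` (1-based positions): `w[t] = w[t+p]`
whenever `i ≤ t` and `t + p ≤ j`. -/
def PeriodOn {α : Type*} (w : List α) (i j p : ℕ) : Prop :=
  ∀ t ∈ Finset.Icc i j, t + p ≤ j → w[t - 1]? = w[t + p - 1]?

/-- `w[i..j]` is a run (maximal repetition) of `w` with smallest period `p`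
(1-based positions): it is periodic with shortest period `p`, `2p ≤ j - i + 1`,
and the period extends neither to position `i-1` nor to `j+1`. -/
def IsRun {α : Type*} (w : List α) (i j p : ℕ) : Prop :=
  1 ≤ i ∧ i ≤ j ∧ j ≤ w.length ∧ 0 < p ∧ 2 * p ≤ j - i + 1 ∧
  PeriodOn w i j p ∧
  (∀ q ∈ Finset.Ico 1 p, ¬ PeriodOn w i j q) ∧
  (i = 1 ∨ w[i - 2]? ≠ w[i + p - 2]?) ∧
  (j = w.length ∨ w[j]? ≠ w[j - p]?)

/-- `x` occurs in `w` at (1-based) position `s`. -/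
def OccAt {α : Type*} (w x : List α) (s : ℕ) : Prop :=
  1 ≤ s ∧ s + x.length - 1 ≤ w.length ∧ (w.drop (s - 1)).take x.length = x

lemma occ_get {α : Type*} {w x : List α} {s : ℕ} (h : OccAt w x s) {m : ℕ}
    (hm : m < x.length) : w[s - 1 + m]? = x[m]? := by
  obtain ⟨_, _, heq⟩ := h
  conv_rhs => rw [← heq]
  rw [List.getElem?_take_of_lt hm, List.getElem?_drop]

lemma periodOn_mono {α : Type*} {w : List α} {i j i' j' p : ℕ} (h : PeriodOn w i j p)
    (hi : i ≤ i') (hj : j' ≤ j) : PeriodOn w i' j' p := by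
  intro t ht htp
  rw [Finset.mem_Icc] at ht
  exact h t (Finset.mem_Icc.2 ⟨le_trans hi ht.1, le_trans ht.2 hj⟩) (le_trans htp hj)

/-- Two consecutive crossing occurrences `a < b` of `x` at position `k` satisfy
`d = b - a < |x|`, the factor `w[a .. b+|x|-1]` has period `d`, and the maximal
extension of this factor with period `d` is a run of `w` with smallest period
exactly `d`. -/
theorem consecutive_crossing_occurrences_run {α : Type*} (w x : List α) (k a b : ℕ)
    (hx : x ≠ []) (hab : a < b)
    (ha : OccAt w x a ∧ a ≤ k ∧ k ≤ a + x.length - 1)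
    (hb : OccAt w x b ∧ b ≤ k ∧ k ≤ b + x.length - 1)
    (hcons : ∀ t, a < t → t < b →
      ¬ (OccAt w x t ∧ t ≤ k ∧ k ≤ t + x.length - 1)) :
    b - a < x.length ∧
    PeriodOn w a (b + x.length - 1) (b - a) ∧
    ∃ i j, i ≤ a ∧ b + x.length - 1 ≤ j ∧ IsRun w i j (b - a) := by
  have hL : 1 ≤ x.length := List.length_pos_iff.2 hx
  obtain ⟨haocc, hak, hka⟩ := ha
  obtain ⟨hbocc, hbk, hkb⟩ := hb
  have ha1 : 1 ≤ a := haocc.1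
  have haL : a + x.length - 1 ≤ w.length := haocc.2.1
  have hb1 : 1 ≤ b := hbocc.1
  have hbL : b + x.length - 1 ≤ w.length := hbocc.2.1
  set L := x.length with hLdef
  set d := b - a with hddef
  have hdL : d < L := by omega
  have hper : PeriodOn w a (b + L - 1) d := by
    intro t ht htp
    rw [Finset.mem_Icc] at ht
    have hm : t - a < L := by omega
    rw [show t - 1 = a - 1 + (t - a) by omega,
      show t + d - 1 = b - 1 + (t - a) by omega,
      occ_get haocc hm, occ_get hbocc hm]
  have hble : b + L - 1 ≤ w.length := hbL
  set j := Nat.findGreatest (fun j' => b + L - 1 ≤ j' ∧ PeriodOn w a j' d) w.length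
    with hjdef
  have hPj : b + L - 1 ≤ j ∧ PeriodOn w a j d :=
    Nat.findGreatest_spec (P := fun j' => b + L - 1 ≤ j' ∧ PeriodOn w a j' d) hble ⟨le_rfl, hper⟩
  have hjw : j ≤ w.length := Nat.findGreatest_le _
  have hjmax : ∀ m, j < m → m ≤ w.length → ¬ (b + L - 1 ≤ m ∧ PeriodOn w a m d) :=
    fun m h1 h2 => Nat.findGreatest_is_greatest h1 h2
  have hex : ∃ i', 1 ≤ i' ∧ i' ≤ a ∧ PeriodOn w i' j d := ⟨a, ha1, le_rfl, hPj.2⟩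
  set i := Nat.find hex with hidef
  obtain ⟨hi1, hia, hperij⟩ := Nat.find_spec hex
  have himin : ∀ m, m < i → ¬ (1 ≤ m ∧ m ≤ a ∧ PeriodOn w m j d) :=
    fun m hm => Nat.find_min hex hm
  have hleft : i = 1 ∨ w[i - 2]? ≠ w[i + d - 2]? := by
    by_cases h1 : i = 1
    · exact Or.inl h1
    · refine Or.inr fun heq => ?_
      apply himin (i - 1) (by omega)
      refine ⟨by omega, by omega, fun t ht htp => ?_⟩
      rw [Finset.mem_Icc] at ht
      by_cases hti : t = i - 1
      · rw [show t - 1 = i - 2 by omega, show t + d - 1 = i + d - 2 by omega]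
        exact heq
      · exact hperij t (Finset.mem_Icc.2 ⟨by omega, ht.2⟩) htp
  have hright : j = w.length ∨ w[j]? ≠ w[j - d]? := by
    by_cases hjl : j = w.length
    · exact Or.inl hjl
    · refine Or.inr fun heq => ?_
      apply hjmax (j + 1) (by omega) (by omega)
      refine ⟨by omega, fun t ht htp => ?_⟩
      rw [Finset.mem_Icc] at ht
      by_cases htj : t + d = j + 1
      · rw [show t - 1 = j - d by omega, show t + d - 1 = j by omega]
        exact heq.symm
      · exact hPj.2 t (Finset.mem_Icc.2 ⟨ht.1, by omega⟩) (by omega)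
  have hmin : ∀ q ∈ Finset.Ico 1 d, ¬ PeriodOn w i j q := by
    intro q hq hQ
    rw [Finset.mem_Ico] at hq
    have hQ' : PeriodOn w a (b + L - 1) q := periodOn_mono hQ hia hPj.1
    have hocc : OccAt w x (a + q) := by
      refine ⟨by omega, by omega, ?_⟩
      apply List.ext_getElem?
      intro m
      by_cases hm : m < L
      · rw [List.getElem?_take_of_lt hm, List.getElem?_drop]
        have hstep := hQ' (a + m) (Finset.mem_Icc.2 ⟨by omega, by omega⟩) (by omega)
        rw [show a + m - 1 = a - 1 + m by omega,
          show a + m + q - 1 = a + q - 1 + m by omega] at hstep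
        rw [← hstep, occ_get haocc hm]
      · rw [List.getElem?_eq_none_iff.2 (by omega : x.length ≤ m)]
        apply List.getElem?_eq_none_iff.2
        rw [List.length_take, List.length_drop]
        omega
    exact hcons (a + q) (by omega) (by omega) ⟨hocc, by omega, by omega⟩
  exact ⟨hdL, hper, i, j, hia, hPj.1, hi1, by omega, hjw, by omega, by omega,
    hperij, hmin, hleft, hright⟩
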